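/- arXiv:2510.05045 — 2 statements merged into one kernel-verified Lean document; each statement's English description precedes it below -/
import Mathlib

section
/- For monotone extensive transformations α, β of {1,…,n}, the map S satisfies S(α + β) = S(α) + S(β), where α + β is the pointwise maximum of α and β and the sum of Boolean matrices is entrywise maximum. Hence α ↦ S(α) is an isomorphism of additively idempotent semirings from C_n (with pointwise-max addition and composition) onto S_n (with entrywise-max addition and Boolean matrix multiplication). -/
/-- Boolean matrix multiplication: entry `(i,j)` of `A·B` is `1` iff
`max_k min(A i k, B k j) = 1`, i.e. iff some `k` has `A i k = B k j = 1`. -/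
def bmul {n : ℕ} (A B : Matrix (Fin n) (Fin n) Bool) : Matrix (Fin n) (Fin n) Bool :=
  fun i j => decide (∃ k, A i k ∧ B k j)

/-- Boolean matrix addition: entrywise maximum. -/
def badd {n : ℕ} (A B : Matrix (Fin n) (Fin n) Bool) : Matrix (Fin n) (Fin n) Bool :=
  fun i j => A i j || B i j

/-- A Boolean matrix is stair triangular if it is (upper) triangular (entries below
the diagonal are `0`), all diagonal entries are `1`, and `a_{ij} = 1` with `i < j`
forces `a_{ik} = 1` and `a_{kj} = 1` for all `i ≤ k ≤ j`. -/
def StairTriangular {n : ℕ} (A : Matrix (Fin n) (Fin n) Bool) : Prop :=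
  (∀ i j : Fin n, j < i → A i j = false) ∧
  (∀ i, A i i = true) ∧
  ∀ i j : Fin n, i < j → A i j = true →
    ∀ k : Fin n, i ≤ k → k ≤ j → A i k = true ∧ A k j = true

/-- The matrix `S(α)`: its `(i,j)` entry is `1` iff `i ≤ j ≤ α(i)`. -/
def Smat {n : ℕ} (α : Fin n → Fin n) : Matrix (Fin n) (Fin n) Bool :=
  fun i j => decide (i ≤ j ∧ j ≤ α i)

/-!
`S(α)` records, in row `i`, the interval `[i, α i]`. Since the pointwise maximum of two
intervals starting at `i` is their union, `S` is additive; it is injective because `α i`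
is the last `1` of row `i`. Conversely each row of a stair triangular matrix is an interval
`[i, r i]`, and the stair condition makes `r` monotone, so `S` is onto. Finally `j` lies in
`[i, β (α i)]` iff it is reachable in two steps `i ≤ k ≤ α i`, `k ≤ j ≤ β k`: take `k = j` if
`j ≤ α i` and `k = α i` otherwise, and use monotonicity of `β` for the converse.
-/

variable {n : ℕ}

@[simp]
theorem Smat_apply_eq_true {α : Fin n → Fin n} {i j : Fin n} :
    Smat α i j = true ↔ i ≤ j ∧ j ≤ α i := by
  simp [Smat]

theorem Smat_max (α β : Fin n → Fin n) :
    Smat (fun i => max (α i) (β i)) = badd (Smat α) (Smat β) := by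
  funext i j
  simp only [Smat, badd, le_max_iff, and_or_left, Bool.decide_or]

theorem stairTriangular_Smat {α : Fin n → Fin n} (hmono : Monotone α)
    (hext : ∀ i, i ≤ α i) : StairTriangular (Smat α) := by
  refine ⟨fun i j hji => ?_, fun i => by simp [hext i], fun i j _ hij k hik hkj => ?_⟩
  · simp [Smat, hji]
  · simp only [Smat_apply_eq_true] at hij ⊢
    exact ⟨⟨hik, hkj.trans hij.2⟩, hkj, hij.2.trans (hmono hik)⟩

theorem Smat_injOn : Set.InjOn (Smat (n := n)) {α | ∀ i, i ≤ α i} := by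
  intro α hα β hβ h
  funext i
  have hrow : ∀ j, i ≤ j → (j ≤ α i ↔ j ≤ β i) := fun j hij => by
    simpa [Smat, hij] using congrFun (congrFun h i) j
  exact le_antisymm ((hrow _ (hα i)).1 le_rfl) ((hrow _ (hβ i)).2 le_rfl)

theorem Smat_comp {α β : Fin n → Fin n} (hα : ∀ i, i ≤ α i) (hβmono : Monotone β)
    (hβ : ∀ i, i ≤ β i) : Smat (β ∘ α) = bmul (Smat α) (Smat β) := by
  funext i j
  rw [Bool.eq_iff_iff]
  simp only [bmul, decide_eq_true_eq, Smat_apply_eq_true, Function.comp_apply]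
  constructor
  · rintro ⟨hij, hj⟩
    rcases le_or_gt j (α i) with h | h
    · exact ⟨j, ⟨hij, h⟩, le_rfl, hβ j⟩
    · exact ⟨α i, ⟨hα i, le_rfl⟩, h.le, hj⟩
  · rintro ⟨k, ⟨hik, hkα⟩, hkj, hjβ⟩
    exact ⟨hik.trans hkj, hjβ.trans (hβmono hkα)⟩

def rowEnd (A : Matrix (Fin n) (Fin n) Bool) (i : Fin n) : Fin n :=
  (insert i ({j | A i j = true} : Finset (Fin n))).max' (Finset.insert_nonempty _ _)

theorem self_le_rowEnd (A : Matrix (Fin n) (Fin n) Bool) (i : Fin n) : i ≤ rowEnd A i :=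
  Finset.le_max' _ _ (Finset.mem_insert_self _ _)

theorem le_rowEnd {A : Matrix (Fin n) (Fin n) Bool} {i j : Fin n} (h : A i j = true) :
    j ≤ rowEnd A i :=
  Finset.le_max' _ _ (Finset.mem_insert_of_mem (by simpa using h))

namespace StairTriangular

variable {A : Matrix (Fin n) (Fin n) Bool} (hA : StairTriangular A)
include hA

theorem apply_rowEnd (i : Fin n) : A i (rowEnd A i) = true := by
  have hmem : rowEnd A i ∈ insert i ({j | A i j = true} : Finset (Fin n)) :=
    Finset.max'_mem _ _
  rcases Finset.mem_insert.1 hmem with h | h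
  · rw [h]
    exact hA.2.1 i
  · simpa using h

theorem apply_of_le {i j : Fin n} (hij : A i j = true) {k : Fin n} (hik : i ≤ k)
    (hkj : k ≤ j) : A i k = true ∧ A k j = true := by
  rcases (hik.trans hkj).lt_or_eq with h | rfl
  · exact hA.2.2 i j h hij k hik hkj
  · obtain rfl := le_antisymm hkj hik
    exact ⟨hij, hij⟩

theorem apply_eq_true_iff {i j : Fin n} : A i j = true ↔ i ≤ j ∧ j ≤ rowEnd A i := by
  refine ⟨fun h => ⟨not_lt.1 fun hji => ?_, le_rowEnd h⟩, fun ⟨hij, hj⟩ =>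
    (hA.apply_of_le (hA.apply_rowEnd i) hij hj).1⟩
  simp [hA.1 i j hji] at h

theorem monotone_rowEnd : Monotone (rowEnd A) := by
  intro i i' hii'
  rcases le_or_gt i' (rowEnd A i) with h | h
  · exact le_rowEnd (hA.apply_of_le (hA.apply_rowEnd i) hii' h).2
  · exact h.le.trans (self_le_rowEnd A i')

theorem Smat_rowEnd : Smat (rowEnd A) = A := by
  funext i j
  rw [Bool.eq_iff_iff, Smat_apply_eq_true, hA.apply_eq_true_iff]

end StairTriangular

/-- For monotone extensive `α, β`, `S(α + β) = S(α) + S(β)` (pointwise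
max of transformations, entrywise max of Boolean matrices). Hence `α ↦ S(α)` is an
isomorphism of additively idempotent semirings from `C_n` (pointwise-max addition and
composition) onto `S_n` (entrywise-max addition and Boolean matrix multiplication):
it is additive, a bijection onto the stair triangular matrices, and multiplicative. -/
theorem Smat_semiring_iso (n : ℕ) :
    (∀ α β : Fin n → Fin n, (Monotone α ∧ ∀ i, i ≤ α i) → (Monotone β ∧ ∀ i, i ≤ β i) →
      Smat (fun i => max (α i) (β i)) = badd (Smat α) (Smat β)) ∧
    Set.BijOn (Smat (n := n)) {α | Monotone α ∧ ∀ i, i ≤ α i} {A | StairTriangular A} ∧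
    (∀ α β : Fin n → Fin n, (Monotone α ∧ ∀ i, i ≤ α i) → (Monotone β ∧ ∀ i, i ≤ β i) →
      Smat (β ∘ α) = bmul (Smat α) (Smat β)) :=
  ⟨fun α β _ _ => Smat_max α β,
    ⟨fun _ hα => stairTriangular_Smat hα.1 hα.2,
      Smat_injOn.mono fun _ hα => hα.2,
      fun A hA => ⟨rowEnd A, ⟨hA.monotone_rowEnd, self_le_rowEnd A⟩, hA.Smat_rowEnd⟩⟩,
    fun _ _ hα hβ => Smat_comp hα.2 hβ.1 hβ.2⟩
end

section
/- For every n ≥ 1: (i) there is no injective map f from the set of monotone extensive transformations of {1,…,n+2} to the set of upper triangular Boolean n×n matrices satisfying f(αβ) = f(α)·f(β) for all α, β (so the Catalan monoid C_{n+2} does not embed into the monoid T_n); and (ii) there is no injective map g from the set of monotone extensive transformations of {1,…,n+1} to the set of upper triangular Boolean n×n matrices satisfying both g(αβ) = g(α)·g(β) and g(α+β) = g(α) + g(β) for all α, β (so the Catalan semiring C_{n+1} does not embed into the semiring T_n), and likewise no such injective multiplication- and addition-preserving map exists from the set of monotone decreasing transformations of {1,…,n+2} (so C⁻_{n+2} does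 not embed into T_n). -/
/-- A Boolean matrix is upper triangular if `a_{ij} = 0` whenever `j < i`. -/
def UpperTri {n : ℕ} (A : Matrix (Fin n) (Fin n) Bool) : Prop :=
  ∀ i j : Fin n, j < i → A i j = false

open Finset

section BoolMatrix

variable {n : ℕ} {A B : Matrix (Fin n) (Fin n) Bool}

lemma UpperTri.le_of_apply_eq_true (hA : UpperTri A) {i j : Fin n} (h : A i j = true) : i ≤ j :=
  le_of_not_gt fun hji => by simp [hA i j hji] at h

lemma bmul_apply_self_of_upperTri (hA : UpperTri A) (hB : UpperTri B) (i : Fin n) :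
    bmul A B i i = (A i i && B i i) := by
  rw [Bool.eq_iff_iff]
  simp only [bmul, decide_eq_true_eq, Bool.and_eq_true]
  constructor
  · rintro ⟨k, hik, hki⟩
    obtain rfl : k = i := le_antisymm (hB.le_of_apply_eq_true hki) (hA.le_of_apply_eq_true hik)
    exact ⟨hik, hki⟩
  · exact fun h => ⟨i, h⟩

lemma apply_self_eq_of_bmul_eq_of_badd_eq (hA : UpperTri A) (hB : UpperTri B)
    (hmul : bmul A B = B) (hadd : badd A B = B) (i : Fin n) : A i i = B i i := by
  have h₁ := congrFun₂ hmul i i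
  have h₂ := congrFun₂ hadd i i
  rw [bmul_apply_self_of_upperTri hA hB] at h₁
  simp only [badd] at h₂
  revert h₁ h₂
  cases A i i <;> cases B i i <;> simp

lemma apply_eq_true_of_badd_eq (h : badd A B = B) {i j : Fin n} (hA : A i j = true) :
    B i j = true := by
  rw [← h]
  simp [badd, hA]

def bone : Matrix (Fin n) (Fin n) Bool := fun i j => decide (i = j)

def bpow (A : Matrix (Fin n) (Fin n) Bool) : ℕ → Matrix (Fin n) (Fin n) Bool
  | 0 => bone
  | k + 1 => bmul (bpow A k) A

lemma bpow_one (A : Matrix (Fin n) (Fin n) Bool) : bpow A 1 = A := by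
  funext i j
  simp [bpow, bmul, bone]

def IsWalk (A : Matrix (Fin n) (Fin n) Bool) (k : ℕ) (c : ℕ → Fin n) : Prop :=
  ∀ t < k, A (c t) (c (t + 1)) = true

lemma bpow_apply_eq_true_iff (k : ℕ) (i j : Fin n) :
    bpow A k i j = true ↔ ∃ c, c 0 = i ∧ c k = j ∧ IsWalk A k c := by
  induction k generalizing j with
  | zero =>
    simp only [bpow, bone, decide_eq_true_eq]
    exact ⟨fun h => ⟨fun _ => i, rfl, h, fun t ht => absurd ht t.not_lt_zero⟩,
      fun ⟨c, hi, hj, _⟩ => hi ▸ hj⟩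
  | succ k ih =>
    simp only [bpow, bmul, decide_eq_true_eq]
    constructor
    · rintro ⟨l, hl, hlj⟩
      obtain ⟨c, hi, rfl, hc⟩ := (ih l).1 hl
      refine ⟨fun t => if t ≤ k then c t else j, by simp [hi], by simp, fun t ht => ?_⟩
      rcases (Nat.lt_succ_iff.1 ht).lt_or_eq with ht | rfl
      · simpa [ht.le, Nat.succ_le_of_lt ht] using hc t ht
      · simpa using hlj
    · rintro ⟨c, hi, rfl, hc⟩
      exact ⟨c k, (ih _).2 ⟨c, hi, rfl, fun t ht => hc t (by omega)⟩, hc k k.lt_succ_self⟩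

lemma IsWalk.exists_eq_succ (hA : UpperTri A) {k : ℕ} (hk : n ≤ k) {c : ℕ → Fin n}
    (hc : IsWalk A k c) : ∃ t < k, c t = c (t + 1) := by
  by_contra! h
  have hlt : ∀ t < k, c t < c (t + 1) :=
    fun t ht => (hA.le_of_apply_eq_true (hc t ht)).lt_of_ne (h t ht)
  have hgrow : ∀ t ≤ k, t ≤ (c t : ℕ) := by
    intro t
    induction t with
    | zero => simp
    | succ t ih =>
      intro ht
      have := Fin.lt_def.1 (hlt t (by omega))
      have := ih (by omega)
      omega
  have := hgrow n hk
  omega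

lemma IsWalk.repeat_vertex {k t : ℕ} {c : ℕ → Fin n} (hc : IsWalk A k c) (ht : t < k)
    (hloop : c t = c (t + 1)) : IsWalk A (k + 1) (fun s => c (if s ≤ t then s else s - 1)) := by
  intro s hs
  dsimp only
  rcases lt_trichotomy s t with h | rfl | h
  · simpa [h.le, Nat.succ_le_of_lt h] using hc s (by omega)
  · simpa [← hloop] using hc s ht
  · rw [if_neg (by omega), if_neg (by omega), Nat.add_sub_cancel]
    simpa [Nat.sub_add_cancel (by omega : 1 ≤ s)] using hc (s - 1) (by omega)

lemma IsWalk.skip_vertex {k t : ℕ} {c : ℕ → Fin n} (hc : IsWalk A (k + 1) c) (ht : t < k + 1)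
    (hloop : c t = c (t + 1)) : IsWalk A k (fun s => c (if s < t then s else s + 1)) := by
  intro s hs
  dsimp only
  rcases lt_trichotomy (s + 1) t with h | h | h
  · rw [if_pos (by omega), if_pos h]
    exact hc s (by omega)
  · rw [if_pos (by omega), if_neg (by omega)]
    subst h
    rw [← hloop]
    exact hc s (by omega)
  · rw [if_neg (by omega), if_neg (by omega)]
    exact hc (s + 1) (by omega)

lemma bpow_succ_of_upperTri (hA : UpperTri A) {k : ℕ} (hk : n ≤ k) :
    bpow A (k + 1) = bpow A k := by
  funext i j
  rw [Bool.eq_iff_iff, bpow_apply_eq_true_iff, bpow_apply_eq_true_iff]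
  constructor
  · rintro ⟨c, rfl, rfl, hc⟩
    obtain ⟨t, ht, hloop⟩ := hc.exists_eq_succ hA (by omega)
    refine ⟨_, ?_, by rw [if_neg (by omega)], hc.skip_vertex ht hloop⟩
    rcases Nat.eq_zero_or_pos t with rfl | ht0
    · exact hloop.symm
    · rw [if_pos ht0]
  · rintro ⟨c, rfl, rfl, hc⟩
    obtain ⟨t, ht, hloop⟩ := hc.exists_eq_succ hA hk
    exact ⟨_, by simp, by rw [if_neg (by omega), Nat.add_sub_cancel], hc.repeat_vertex ht hloop⟩

end BoolMatrix

def truncShift (m k : ℕ) (i : Fin (m + 1)) : Fin (m + 1) :=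
  ⟨min (i + k) m, by omega⟩

lemma monotone_truncShift (m k : ℕ) : Monotone (truncShift m k) := by
  intro i j hij
  simp only [truncShift, Fin.le_def] at hij ⊢
  omega

lemma le_truncShift (m k : ℕ) (i : Fin (m + 1)) : i ≤ truncShift m k i := by
  simp only [truncShift, Fin.le_def]
  omega

lemma truncShift_comp (m k l : ℕ) : truncShift m l ∘ truncShift m k = truncShift m (k + l) := by
  funext i
  simp only [Function.comp_apply, truncShift, Fin.ext_iff]
  omega

lemma rank_le_add_of_strictMonoOn {X : Type*} [Preorder X] {P : Set X} {b : X} {ρ φ : X → ℕ}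
    (hφ : StrictMonoOn φ P) (hpred : ∀ α ∈ P, α ≠ b → ∃ β ∈ P, β < α ∧ ρ β + 1 = ρ α)
    {α : X} (hα : α ∈ P) : ρ α ≤ ρ b + φ α := by
  induction hρ : ρ α generalizing α with
  | zero => exact Nat.zero_le _
  | succ r ih =>
    by_cases hb : α = b
    · subst hb
      omega
    obtain ⟨β, hβ, hβα, hρβ⟩ := hpred α hα hb
    have := ih hβ (by omega)
    have := hφ hβ hα hβα
    omega

lemma Monotone.update_of_le {ι κ : Type*} [LinearOrder ι] [Preorder κ] {α : ι → κ}
    (hα : Monotone α) {i : ι} {v : κ} (hlow : ∀ j < i, α j ≤ v) (hhigh : v ≤ α i) :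
    Monotone (Function.update α i v) := by
  intro j k hjk
  by_cases hj : j = i <;> by_cases hk : k = i
  · rw [hj, hk]
  · subst hj
    simpa [Function.update_of_ne hk] using hhigh.trans (hα hjk)
  · subst hk
    simpa [Function.update_of_ne hj] using hlow j (lt_of_le_of_ne hjk hj)
  · simpa [Function.update_of_ne hj, Function.update_of_ne hk] using hα hjk

lemma exists_monotone_pred {m : ℕ} {b α : Fin m → Fin m} (hb : Monotone b) (hα : Monotone α)
    (hbα : b ≤ α) (hne : α ≠ b) :
    ∃ β : Fin m → Fin m, Monotone β ∧ b ≤ β ∧ β < α ∧ ∑ i, (β i : ℕ) + 1 = ∑ i, (α i : ℕ) := by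
  have hex : ∃ i, b i < α i := by
    by_contra! h
    exact hne (le_antisymm h hbα)
  obtain ⟨i, hi, hmin⟩ := WellFounded.has_min wellFounded_lt {i | b i < α i} hex
  have hi' : (b i : ℕ) < α i := hi
  obtain ⟨v, hv⟩ : ∃ v : Fin m, (v : ℕ) + 1 = α i := ⟨⟨α i - 1, by omega⟩, by simp; omega⟩
  have hαβ : ∀ j, (α j : ℕ) = Function.update α i v j + if j = i then 1 else 0 := by
    intro j
    by_cases hj : j = i
    · subst hj
      simp only [Function.update_self, if_true]
      omega
    · simp [hj]
  refine ⟨Function.update α i v, hα.update_of_le (fun j hj => ?_) ?_, fun j => ?_,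
    Pi.lt_def.2 ⟨fun j => ?_, i, ?_⟩, ?_⟩
  · have hbj : ¬ b j < α j := fun h => hmin j h hj
    have hbji := Fin.le_def.1 (hb hj.le)
    rw [Fin.lt_def, not_lt] at hbj
    rw [Fin.le_def]
    omega
  · rw [Fin.le_def]
    omega
  · by_cases hj : j = i
    · subst hj
      rw [Function.update_self, Fin.le_def]
      omega
    · rw [Function.update_of_ne hj]
      exact hbα j
  · rw [Fin.le_def, hαβ j]
    omega
  · rw [Fin.lt_def, hαβ i]
    simp
  · rw [sum_congr rfl fun j _ => hαβ j, sum_add_distrib, sum_ite_eq']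
    simp

lemma strictMonoOn_card_filter {X ι κ : Type*} [Preorder X] {P : Set X}
    {g : X → Matrix ι κ Bool} {S : Finset (ι × κ)} (hinj : Set.InjOn g P)
    (hmono : ∀ α ∈ P, ∀ β ∈ P, α ≤ β → ∀ i j, g α i j = true → g β i j = true)
    (hfix : ∀ α ∈ P, ∀ β ∈ P, ∀ p ∉ S, g α p.1 p.2 = g β p.1 p.2) :
    StrictMonoOn (fun α => #{p ∈ S | g α p.1 p.2}) P := by
  intro α hα β hβ hlt
  have hsub : {p ∈ S | g α p.1 p.2} ⊆ {p ∈ S | g β p.1 p.2} :=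
    monotone_filter_right S fun p _ => hmono α hα β hβ hlt.le p.1 p.2
  obtain ⟨i, j, hij⟩ : ∃ i j, g α i j ≠ g β i j := by
    by_contra! h
    exact hlt.ne (hinj hα hβ (funext₂ h))
  have hS : (i, j) ∈ S := by
    by_contra h
    exact hij (hfix α hα β hβ _ h)
  have hαij : g α i j = false := by
    cases h : g α i j
    · rfl
    · exact absurd (h.trans (hmono α hα β hβ hlt.le i j h).symm) hij
  refine card_lt_card ((ssubset_iff_of_subset hsub).2 ⟨(i, j), ?_, ?_⟩) <;>
    simp_all

lemma apply_eq_true_of_le_of_map_max {ι κ : Type*} [LinearOrder κ] {n : ℕ} {P : Set (ι → κ)}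
    {g : (ι → κ) → Matrix (Fin n) (Fin n) Bool}
    (hadd : ∀ α ∈ P, ∀ β ∈ P, g (fun i => max (α i) (β i)) = badd (g α) (g β)) :
    ∀ α ∈ P, ∀ β ∈ P, α ≤ β → ∀ i j, g α i j = true → g β i j = true := by
  intro α hα β hβ hle i j h
  have hsup : (fun i => max (α i) (β i)) = β := funext fun i => max_eq_right (hle i)
  exact apply_eq_true_of_badd_eq (by rw [← hadd α hα β hβ, hsup]) h

lemma sum_val_mul_two (m : ℕ) : (∑ i : Fin m, (i : ℕ)) * 2 = m * (m - 1) := by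
  rw [Fin.sum_univ_eq_sum_range (fun i => i), sum_range_id_mul_two]

lemma card_filter_fst_lt_snd_mul_two (n : ℕ) :
    #{p : Fin n × Fin n | p.1 < p.2} * 2 = n * (n - 1) := by
  rw [← sum_val_mul_two, card_filter, Fintype.sum_prod_type_right]
  congr 1
  refine sum_congr rfl fun j _ => ?_
  rw [← card_filter, ← Fin.card_Iio j]
  congr 1
  ext i
  simp

lemma card_filter_fst_le_snd_mul_two (n : ℕ) :
    #{p : Fin n × Fin n | p.1 ≤ p.2} * 2 = n * (n + 1) := by
  have h : #{p : Fin n × Fin n | p.1 ≤ p.2} = ∑ j : Fin n, ((j : ℕ) + 1) := by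
    rw [card_filter, Fintype.sum_prod_type_right]
    refine sum_congr rfl fun j _ => ?_
    rw [← card_filter, ← Fin.card_Iic j]
    congr 1
    ext i
    simp
  rw [h, sum_add_distrib, add_mul, sum_val_mul_two]
  rcases n with _ | n
  · rfl
  · simp
    ring

lemma sum_le_add_card_of_injOn_of_map_max {m n : ℕ} {P : Set (Fin m → Fin m)} {b : Fin m → Fin m}
    {g : (Fin m → Fin m) → Matrix (Fin n) (Fin n) Bool} {S : Finset (Fin n × Fin n)}
    (hpred : ∀ α ∈ P, α ≠ b → ∃ β ∈ P, β < α ∧ ∑ i, (β i : ℕ) + 1 = ∑ i, (α i : ℕ))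
    (hinj : Set.InjOn g P)
    (hadd : ∀ α ∈ P, ∀ β ∈ P, g (fun i => max (α i) (β i)) = badd (g α) (g β))
    (hfix : ∀ α ∈ P, ∀ β ∈ P, ∀ p ∉ S, g α p.1 p.2 = g β p.1 p.2) {α : Fin m → Fin m}
    (hα : α ∈ P) : ∑ i, (α i : ℕ) ≤ ∑ i, (b i : ℕ) + #S :=
  (rank_le_add_of_strictMonoOn (ρ := fun α => ∑ i, (α i : ℕ))
    (strictMonoOn_card_filter hinj (apply_eq_true_of_le_of_map_max hadd) hfix) hpred hα).trans
    (Nat.add_le_add_left (card_le_card (filter_subset _ _)) _)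

theorem not_exists_mul_embedding_extensive (n : ℕ) (hn : 1 ≤ n) :
    ¬ ∃ f : (Fin (n + 2) → Fin (n + 2)) → Matrix (Fin n) (Fin n) Bool,
      (∀ α, (Monotone α ∧ ∀ i, i ≤ α i) → UpperTri (f α)) ∧
      Set.InjOn f {α | Monotone α ∧ ∀ i, i ≤ α i} ∧
      (∀ α β : Fin (n + 2) → Fin (n + 2),
        (Monotone α ∧ ∀ i, i ≤ α i) → (Monotone β ∧ ∀ i, i ≤ β i) →
        f (β ∘ α) = bmul (f α) (f β)) := by
  rintro ⟨f, hUT, hinj, hmul⟩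
  have hmem : ∀ k, Monotone (truncShift (n + 1) k) ∧ ∀ i, i ≤ truncShift (n + 1) k i :=
    fun k => ⟨monotone_truncShift _ k, le_truncShift _ k⟩
  have hpow : ∀ k, f (truncShift (n + 1) (k + 1)) = bpow (f (truncShift (n + 1) 1)) (k + 1) := by
    intro k
    induction k with
    | zero => rw [bpow_one]
    | succ k ih =>
      rw [← truncShift_comp, hmul _ _ (hmem _) (hmem _), ih]
      rfl
  obtain ⟨k, rfl⟩ : ∃ k, n = k + 1 := ⟨n - 1, by omega⟩
  have hstable := bpow_succ_of_upperTri (hUT _ (hmem 1)) (le_refl (k + 1))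
  have heq := hinj (hmem (k + 2)) (hmem (k + 1)) (by rw [hpow (k + 1), hpow k, hstable])
  simpa [truncShift] using congrArg (fun α => (α 0 : ℕ)) heq

theorem not_exists_semiring_embedding_extensive (n : ℕ) (hn : 1 ≤ n) :
    ¬ ∃ g : (Fin (n + 1) → Fin (n + 1)) → Matrix (Fin n) (Fin n) Bool,
      (∀ α, (Monotone α ∧ ∀ i, i ≤ α i) → UpperTri (g α)) ∧
      Set.InjOn g {α | Monotone α ∧ ∀ i, i ≤ α i} ∧
      (∀ α β : Fin (n + 1) → Fin (n + 1),
        (Monotone α ∧ ∀ i, i ≤ α i) → (Monotone β ∧ ∀ i, i ≤ β i) →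
        g (β ∘ α) = bmul (g α) (g β) ∧
        g (fun i => max (α i) (β i)) = badd (g α) (g β)) := by
  rintro ⟨g, hUT, hinj, hhom⟩
  set P := {α : Fin (n + 1) → Fin (n + 1) | Monotone α ∧ ∀ i, i ≤ α i}
  let ω : Fin (n + 1) → Fin (n + 1) := fun _ => Fin.last n
  have hω : ω ∈ P := ⟨monotone_const, Fin.le_last⟩
  have hdiag : ∀ α ∈ P, ∀ i, g α i i = g ω i i := fun α hα =>
    apply_self_eq_of_bmul_eq_of_badd_eq (hUT α hα) (hUT ω hω) (hhom α ω hα hω).1.symm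
      (by rw [← (hhom α ω hα hω).2]; congr; exact funext fun i => max_eq_right (Fin.le_last _))
  have hfix : ∀ α ∈ P, ∀ β ∈ P, ∀ p ∉ ({p | p.1 < p.2} : Finset (Fin n × Fin n)),
      g α p.1 p.2 = g β p.1 p.2 := by
    rintro α hα β hβ ⟨i, j⟩ hp
    rcases (not_lt.1 (by simpa using hp)).lt_or_eq with hji | rfl
    · rw [hUT α hα i j hji, hUT β hβ i j hji]
    · rw [hdiag α hα, hdiag β hβ]
  have hbound := sum_le_add_card_of_injOn_of_map_max (b := id)
    (fun α hα hne => by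
      obtain ⟨β, hβ, hidβ, hβα, hsum⟩ := exists_monotone_pred monotone_id hα.1 hα.2 hne
      exact ⟨β, ⟨hβ, hidβ⟩, hβα, hsum⟩)
    hinj (fun α hα β hβ => (hhom α β hα hβ).2) hfix hω
  have hsum : ∑ i, (ω i : ℕ) = (n + 1) * n := by simp [ω]
  have h₁ := card_filter_fst_lt_snd_mul_two n
  have h₂ := sum_val_mul_two (n + 1)
  simp only [hsum, id] at hbound
  obtain ⟨k, rfl⟩ : ∃ k, n = k + 1 := ⟨n - 1, by omega⟩
  simp only [Nat.add_sub_cancel] at h₁ h₂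
  nlinarith

theorem not_exists_semiring_embedding_decreasing (n : ℕ) :
    ¬ ∃ h : (Fin (n + 2) → Fin (n + 2)) → Matrix (Fin n) (Fin n) Bool,
      (∀ α, (Monotone α ∧ ∀ i, α i ≤ i) → UpperTri (h α)) ∧
      Set.InjOn h {α | Monotone α ∧ ∀ i, α i ≤ i} ∧
      (∀ α β : Fin (n + 2) → Fin (n + 2),
        (Monotone α ∧ ∀ i, α i ≤ i) → (Monotone β ∧ ∀ i, β i ≤ i) →
        h (β ∘ α) = bmul (h α) (h β) ∧
        h (fun i => max (α i) (β i)) = badd (h α) (h β)) := by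
  rintro ⟨g, hUT, hinj, hhom⟩
  have hfix : ∀ α ∈ {α | Monotone α ∧ ∀ i, α i ≤ i}, ∀ β ∈ {α | Monotone α ∧ ∀ i, α i ≤ i},
      ∀ p ∉ ({p | p.1 ≤ p.2} : Finset (Fin n × Fin n)), g α p.1 p.2 = g β p.1 p.2 := by
    rintro α hα β hβ ⟨i, j⟩ hp
    have hji : j < i := not_le.1 (by simpa using hp)
    rw [hUT α hα i j hji, hUT β hβ i j hji]
  have hbound := sum_le_add_card_of_injOn_of_map_max (b := fun _ => 0)
    (fun α hα hne => by
      obtain ⟨β, hβ, -, hβα, hsum⟩ :=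
        exists_monotone_pred monotone_const hα.1 (fun i => Fin.zero_le (α i)) hne
      exact ⟨β, ⟨hβ, fun i => (hβα.le i).trans (hα.2 i)⟩, hβα, hsum⟩)
    hinj (fun α hα β hβ => (hhom α β hα hβ).2) hfix (α := id) ⟨monotone_id, fun i => le_rfl⟩
  have h₁ := card_filter_fst_le_snd_mul_two n
  have h₂ := sum_val_mul_two (n + 2)
  rw [show n + 2 - 1 = n + 1 by omega] at h₂
  simp only [id, Fin.val_zero, sum_const_zero, zero_add] at hbound
  nlinarith

/-- For every `n ≥ 1`:
(i) there is no injective multiplicative map from the monotone extensive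
transformations of the chain with `n+2` elements to the upper triangular Boolean
`n×n` matrices, so the Catalan monoid `C_{n+2}` does not embed into `T_n`;
(ii) there is no injective map preserving both multiplication and pointwise-max
addition from the monotone extensive transformations of the chain with `n+1`
elements to the upper triangular Boolean `n×n` matrices, so the Catalan semiring
`C_{n+1}` does not embed into the semiring `T_n`; and likewise no such map exists
from the monotone decreasing transformations of the chain with `n+2` elements, so
`C⁻_{n+2}` does not embed into `T_n`. (Here `αβ` denotes `α` followed by `β`.) -/
theorem catalan_no_embedding (n : ℕ) (hn : 1 ≤ n) :
    (¬ ∃ f : (Fin (n + 2) → Fin (n + 2)) → Matrix (Fin n) (Fin n) Bool,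
      (∀ α, (Monotone α ∧ ∀ i, i ≤ α i) → UpperTri (f α)) ∧
      Set.InjOn f {α | Monotone α ∧ ∀ i, i ≤ α i} ∧
      (∀ α β : Fin (n + 2) → Fin (n + 2),
        (Monotone α ∧ ∀ i, i ≤ α i) → (Monotone β ∧ ∀ i, i ≤ β i) →
        f (β ∘ α) = bmul (f α) (f β))) ∧
    (¬ ∃ g : (Fin (n + 1) → Fin (n + 1)) → Matrix (Fin n) (Fin n) Bool,
      (∀ α, (Monotone α ∧ ∀ i, i ≤ α i) → UpperTri (g α)) ∧
      Set.InjOn g {α | Monotone α ∧ ∀ i, i ≤ α i} ∧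
      (∀ α β : Fin (n + 1) → Fin (n + 1),
        (Monotone α ∧ ∀ i, i ≤ α i) → (Monotone β ∧ ∀ i, i ≤ β i) →
        g (β ∘ α) = bmul (g α) (g β) ∧
        g (fun i => max (α i) (β i)) = badd (g α) (g β))) ∧
    (¬ ∃ h : (Fin (n + 2) → Fin (n + 2)) → Matrix (Fin n) (Fin n) Bool,
      (∀ α, (Monotone α ∧ ∀ i, α i ≤ i) → UpperTri (h α)) ∧
      Set.InjOn h {α | Monotone α ∧ ∀ i, α i ≤ i} ∧
      (∀ α β : Fin (n + 2) → Fin (n + 2),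
        (Monotone α ∧ ∀ i, α i ≤ i) → (Monotone β ∧ ∀ i, β i ≤ i) →
        h (β ∘ α) = bmul (h α) (h β) ∧
        h (fun i => max (α i) (β i)) = badd (h α) (h β))) :=
  ⟨not_exists_mul_embedding_extensive n hn, not_exists_semiring_embedding_extensive n hn,
    not_exists_semiring_embedding_decreasing n⟩
end
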